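/- Let U be a metric space, Q a countable dense subset of U, K a subspace of U which is a length space with its induced metric, and p ∈ K. For i, k ∈ ℕ put l_{k,i} = k·2^{-i}. Suppose a sequence {A_i} of subsets of Q satisfies, for every i ∈ ℕ: (A1) p ∈ A_i, and (A2) for each k ∈ {0, …, 2^{2i}}, d_H(B(p, l_{k,i}; K), B(p, l_{k,i}; A_i); U) ≤ 2^{-i}. Then for every R > 0, the sequence of pointed metric spaces {(B(p, R; A_i), p)} converges to (B(p, R; K), p) in the pointed Gromov–Hausdorff topology. -/

import Mathlib

open Metric Filter Set
open scoped ENNReal NNReal Topology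

noncomputable section

universe u v

/-! ### Scaling of metric spaces -/

/-- The metric space obtained from `m` by multiplying the metric by `h > 0`
(the space `hX` of the paper). -/
def scaleMS {X : Type*} (h : ℝ) (hh : 0 < h) (m : MetricSpace X) : MetricSpace X := by
  letI := m
  exact MetricSpace.ofDistTopology (fun x y => h * dist x y)
    (fun x => by simp)
    (fun x y => by simp [dist_comm])
    (fun x y z => by
      show h * dist x z ≤ h * dist x y + h * dist y z
      have := dist_triangle x y z
      nlinarith)
    (fun s => by
      rw [Metric.isOpen_iff]
      constructor
      · rintro H x hx
        obtain ⟨ε, hε, h'⟩ := H x hx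
        refine ⟨h * ε, by positivity, fun y (hy : h * dist x y < h * ε) => h' ?_⟩
        have : dist x y < ε := lt_of_mul_lt_mul_left hy hh.le
        simpa [Metric.mem_ball, dist_comm] using this
      · rintro H x hx
        obtain ⟨ε, hε, h'⟩ := H x hx
        refine ⟨ε / h, by positivity, fun y hy => h' y ?_⟩
        have hb : dist x y < ε / h := by
          have : dist y x < ε / h := hy
          simpa [dist_comm] using this
        show h * dist x y < ε
        calc h * dist x y < h * (ε / h) := mul_lt_mul_of_pos_left hb hh
          _ = ε := by field_simp)
    (fun x y hxy => by
      have hd : dist x y = 0 := by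
        have h0 : dist x y ≥ 0 := dist_nonneg
        have : h * dist x y = 0 := hxy
        nlinarith
      exact eq_of_dist_eq_zero hd)

/-- The scaled metric on a subset `A` of a metric space (the space `hA`). -/
def scaledSubMS {X : Type*} [MetricSpace X] (A : Set X) (h : ℝ) (hh : 0 < h) :
    MetricSpace A := scaleMS h hh inferInstance

/-! ### The Gromov–Hausdorff distance and pseudo-cones -/

/-- The Gromov–Hausdorff distance between two (arbitrary) metric spaces: the infimum of the
Hausdorff distances between isometric copies of the two spaces inside a common metric
space. -/
def ghDist (X : Type u) (Y : Type v) [MetricSpace X] [MetricSpace Y] : ℝ≥0∞ :=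
  ⨅ (Z : Type (max u v)) (_ : MetricSpace Z) (f : X → Z) (g : Y → Z)
    (_ : Isometry f) (_ : Isometry g),
      EMetric.hausdorffEdist (Set.range f) (Set.range g)

/-- `P` is a pseudo-cone of `X` if it is the Gromov–Hausdorff limit of a sequence `uᵢAᵢ`
of rescaled subsets of `X`. -/
def IsPseudoCone (X : Type u) [MetricSpace X] (P : Type v) [MetricSpace P] : Prop :=
  ∃ (A : ℕ → Set X) (u : ℕ → ℝ) (hu : ∀ i, 0 < u i),
    Tendsto (fun i => @ghDist ↥(A i) P (scaledSubMS (A i) (u i) (hu i)) _) atTop (𝓝 0)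

/-- `P` is a pseudo-cone of `X` approximated by a sequence of *compact* subsets of `X`
(`P ∈ kpc(X)`). -/
def IsCompactPseudoCone (X : Type u) [MetricSpace X] (P : Type v) [MetricSpace P] : Prop :=
  ∃ (A : ℕ → Set X) (u : ℕ → ℝ) (hu : ∀ i, 0 < u i),
    (∀ i, IsCompact (A i)) ∧
    Tendsto (fun i => @ghDist ↥(A i) P (scaledSubMS (A i) (u i) (hu i)) _) atTop (𝓝 0)

/-! ### Assouad dimensions -/

/-- The set `𝒜(X)` of Assouad exponents: `β > 0` such that for some `C > 0` every bounded
set `S` can be covered, for every `r > 0`, by at most `C (δ(S)/r)^β` bounded sets of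
diameter at most `r`. -/
def assouadExpSet (X : Type u) [MetricSpace X] : Set ℝ :=
  {β | 0 < β ∧ ∃ C : ℝ, 0 < C ∧ ∀ S : Set X, Bornology.IsBounded S → ∀ r : ℝ, 0 < r →
    ∃ F : Finset (Set X), (∀ t ∈ F, Bornology.IsBounded t ∧ Metric.diam t ≤ r) ∧
      S ⊆ ⋃ t ∈ F, t ∧ (F.card : ℝ) ≤ C * (Metric.diam S / r) ^ β}

/-- The Assouad dimension of a metric space, with values in `ℝ≥0∞`
(equal to `∞` if no exponent works, since `sInf ∅ = ⊤`). -/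
def assouadDim (X : Type u) [MetricSpace X] : ℝ≥0∞ :=
  sInf (ENNReal.ofReal '' assouadExpSet X)

/-- The set `𝓑(X)`: exponents `β > 0` such that for some `C > 0` every finite subset `A`
of `X` satisfies `card A ≤ C (δ(A)/α(A))^β`, where `δ` is the diameter and `α` the minimal
positive separation. -/
def assouadFinSet (X : Type u) [MetricSpace X] : Set ℝ :=
  {β | 0 < β ∧ ∃ C : ℝ, 0 < C ∧ ∀ A : Finset X,
    (A.card : ℝ) ≤ C * (Metric.diam (A : Set X) / Set.infsep (A : Set X)) ^ β}

/-- The lower Assouad dimension of a metric space: the supremum of all `β > 0` such that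
for some `C > 0` every finite set `S` satisfies `card S ≥ C (δ(S)/α(S))^β`. -/
def lowerAssouadDim (X : Type u) [MetricSpace X] : ℝ≥0∞ :=
  sSup (ENNReal.ofReal ''
    {β : ℝ | 0 < β ∧ ∃ C : ℝ, 0 < C ∧ ∀ S : Finset X,
      C * (Metric.diam (S : Set X) / Set.infsep (S : Set X)) ^ β ≤ (S.card : ℝ)})

/-- A metric space is doubling if there is `N` such that every bounded set `S` is contained
in the union of at most `N` closed balls of radius `δ(S)/2`. -/
def IsDoublingSpace (X : Type u) [MetricSpace X] : Prop :=
  ∃ N : ℕ, ∀ S : Set X, Bornology.IsBounded S →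
    ∃ F : Finset X, F.card ≤ N ∧ S ⊆ ⋃ x ∈ F, Metric.closedBall x (Metric.diam S / 2)

/-! ### Quasi-symmetric maps and the conformal Assouad dimension -/

/-- `f : X → Y` is a quasi-symmetric map: a homeomorphism which is `η`-quasi-symmetric for
some homeomorphism `η` of `[0,∞)` (modelled as `ℝ≥0`). -/
def IsQuasiSymmetric {X : Type u} {Y : Type v} [MetricSpace X] [MetricSpace Y]
    (f : X → Y) : Prop :=
  IsHomeomorph f ∧ ∃ η : ℝ≥0 → ℝ≥0, IsHomeomorph η ∧
    ∀ (t : ℝ≥0) (x y z : X), dist x y ≤ (t : ℝ) * dist x z →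
      dist (f x) (f y) ≤ (η t : ℝ) * dist (f x) (f z)

/-- The conformal Assouad dimension: the infimum of the Assouad dimensions of all
quasi-symmetric images of `X`. -/
def confAssouadDim (X : Type u) [MetricSpace X] : ℝ≥0∞ :=
  ⨅ (Y : Type u) (_ : MetricSpace Y) (f : X → Y) (_ : IsQuasiSymmetric f), assouadDim Y

/-! ### Ultralimits -/

/-- The limit of a sequence in `ℝ≥0∞` along an ultrafilter (it always exists, by
compactness of `ℝ≥0∞`). -/
def ultraLim (𝒰 : Ultrafilter ℕ) (f : ℕ → ℝ≥0∞) : ℝ≥0∞ := (𝒰.map f).lim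

theorem tendsto_ultraLim (𝒰 : Ultrafilter ℕ) (f : ℕ → ℝ≥0∞) :
    Tendsto f 𝒰 (𝓝 (ultraLim 𝒰 f)) := by
  have := (𝒰.map f).le_nhds_lim
  rwa [Ultrafilter.coe_map] at this

theorem ultraLim_eq (𝒰 : Ultrafilter ℕ) {f : ℕ → ℝ≥0∞} {a : ℝ≥0∞}
    (h : Tendsto f 𝒰 (𝓝 a)) : ultraLim 𝒰 f = a :=
  tendsto_nhds_unique (tendsto_ultraLim 𝒰 f) h

/-- Type synonym for the product `∀ i, X i`, carrying the ultralimit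
pseudo-extended-metric `edist x y = lim_𝒰 edist (x i) (y i)`. -/
def PreUltralimit (𝒰 : Ultrafilter ℕ) (X : ℕ → Type u) : Type u := ∀ i, X i

instance PreUltralimit.pseudoEMetricSpace (𝒰 : Ultrafilter ℕ) (X : ℕ → Type u)
    [∀ i, MetricSpace (X i)] : PseudoEMetricSpace (PreUltralimit 𝒰 X) where
  edist x y := ultraLim 𝒰 fun i => edist (x i) (y i)
  edist_self x := ultraLim_eq 𝒰 (by simp [tendsto_const_nhds])
  edist_comm x y := by simp only [edist_comm]
  edist_triangle x y z := by
    have hxy := tendsto_ultraLim 𝒰 fun i => edist (x i) (y i)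
    have hyz := tendsto_ultraLim 𝒰 fun i => edist (y i) (z i)
    have hxz := tendsto_ultraLim 𝒰 fun i => edist (x i) (z i)
    exact le_of_tendsto_of_tendsto' hxz (hxy.add hyz) fun i => edist_triangle _ _ _

/-- The class of the base point sequence in the separation quotient. -/
def ultralimitRefPt (𝒰 : Ultrafilter ℕ) (X : ℕ → Type u) [∀ i, MetricSpace (X i)]
    (p : ∀ i, X i) : SeparationQuotient (PreUltralimit 𝒰 X) :=
  SeparationQuotient.mk p

/-- The ultralimit of a sequence of pointed metric spaces with respect to an ultrafilter:
sequences at finite limit distance from the base point sequence, two sequences being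
identified when the ultralimit of their mutual distances vanishes. -/
def Ultralimit (𝒰 : Ultrafilter ℕ) (X : ℕ → Type u) [∀ i, MetricSpace (X i)]
    (p : ∀ i, X i) : Type u :=
  { q : SeparationQuotient (PreUltralimit 𝒰 X) // edist q (ultralimitRefPt 𝒰 X p) ≠ ⊤ }

instance Ultralimit.emetricSpace (𝒰 : Ultrafilter ℕ) (X : ℕ → Type u)
    [∀ i, MetricSpace (X i)] (p : ∀ i, X i) : EMetricSpace (Ultralimit 𝒰 X p) := by
  unfold Ultralimit; infer_instance

instance Ultralimit.metricSpace (𝒰 : Ultrafilter ℕ) (X : ℕ → Type u)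
    [∀ i, MetricSpace (X i)] (p : ∀ i, X i) : MetricSpace (Ultralimit 𝒰 X p) :=
  EMetricSpace.toMetricSpace (by
    rintro ⟨x, hx⟩ ⟨y, hy⟩
    show edist x y ≠ ⊤
    have h1 : edist x y ≤ edist x (ultralimitRefPt 𝒰 X p) +
        edist (ultralimitRefPt 𝒰 X p) y := edist_triangle _ _ _
    have h2 : edist x (ultralimitRefPt 𝒰 X p) + edist (ultralimitRefPt 𝒰 X p) y ≠ ⊤ :=
      ENNReal.add_ne_top.2 ⟨hx, by rw [edist_comm]; exact hy⟩
    exact fun h => h2 (top_le_iff.1 (h ▸ h1)))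

/-- The canonical base point of an ultralimit. -/
def Ultralimit.basePt (𝒰 : Ultrafilter ℕ) (X : ℕ → Type u) [∀ i, MetricSpace (X i)]
    (p : ∀ i, X i) : Ultralimit 𝒰 X p :=
  ⟨ultralimitRefPt 𝒰 X p, by simp⟩

/-! ### Pointed Gromov–Hausdorff convergence, cones -/

/-- An `ε`-approximation between two metric spaces. -/
def IsApproximation {X : Type u} {Y : Type v} [MetricSpace X] [MetricSpace Y]
    (ε : ℝ) (f : X → Y) (g : Y → X) : Prop :=
  (∀ x y : X, |dist x y - dist (f x) (f y)| < ε) ∧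
  (∀ x y : Y, |dist x y - dist (g x) (g y)| < ε) ∧
  (∀ x : X, dist (g (f x)) x < ε) ∧
  (∀ y : Y, dist (f (g y)) y < ε)

/-- Convergence of a sequence of pointed metric spaces in the pointed Gromov–Hausdorff
topology, via approximation maps respecting the base points. -/
def TendstoPointedGH (X : ℕ → Type u) [∀ i, MetricSpace (X i)] (p : ∀ i, X i)
    (Y : Type v) [MetricSpace Y] (q : Y) : Prop :=
  ∃ (ε : ℕ → ℝ) (f : ∀ i, X i → Y) (g : ∀ i, Y → X i),
    (∀ i, 0 < ε i) ∧ Tendsto ε atTop (𝓝 0) ∧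
    ∀ i, IsApproximation (ε i) (f i) (g i) ∧ f i (p i) = q ∧ g i q = p i

/-- `(Y, y)` is a tangent cone of `X` at `p`: there are points `pᵢ → p` and scales
`rᵢ → ∞` such that for every `R > 0` the rescaled closed balls `rᵢ B(pᵢ, R/rᵢ)` converge
to `B(y, R)` in the pointed Gromov–Hausdorff topology. -/
def IsTangentCone (X : Type u) [MetricSpace X] (p : X) (Y : Type v) [MetricSpace Y]
    (y : Y) : Prop :=
  ∃ (pt : ℕ → X) (r : ℕ → ℝ) (hr : ∀ i, 0 < r i),
    Tendsto pt atTop (𝓝 p) ∧ Tendsto r atTop atTop ∧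
    ∀ (R : ℝ) (hR : 0 < R),
      @TendstoPointedGH (fun i => ↥(Metric.closedBall (pt i) (R / r i)))
        (fun i => scaledSubMS _ (r i) (hr i))
        (fun i => ⟨pt i, Metric.mem_closedBall_self (le_of_lt (div_pos hR (hr i)))⟩)
        ↥(Metric.closedBall y R) _ ⟨y, Metric.mem_closedBall_self hR.le⟩

/-- `(Y, y)` is an asymptotic cone of `X` at `p`: as for tangent cones, but with
scales `rᵢ → 0`. -/
def IsAsymptoticCone (X : Type u) [MetricSpace X] (p : X) (Y : Type v) [MetricSpace Y]
    (y : Y) : Prop :=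
  ∃ (pt : ℕ → X) (r : ℕ → ℝ) (hr : ∀ i, 0 < r i),
    Tendsto pt atTop (𝓝 p) ∧ Tendsto r atTop (𝓝 0) ∧
    ∀ (R : ℝ) (hR : 0 < R),
      @TendstoPointedGH (fun i => ↥(Metric.closedBall (pt i) (R / r i)))
        (fun i => scaledSubMS _ (r i) (hr i))
        (fun i => ⟨pt i, Metric.mem_closedBall_self (le_of_lt (div_pos hR (hr i)))⟩)
        ↥(Metric.closedBall y R) _ ⟨y, Metric.mem_closedBall_self hR.le⟩

/-! ### Length spaces and `(ω₀+1)`-spaces -/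

/-- A length space: the (extended) distance between two points is the infimum of the
lengths of the paths joining them. -/
def IsLengthSpace (X : Type u) [MetricSpace X] : Prop :=
  ∀ x y : X, edist x y = ⨅ γ : Path x y, eVariationOn γ Set.univ

/-- A metric space whose topology is that of the one-point compactification of a countable
discrete space. -/
def IsOmegaPlusOneSpace (X : Type u) [TopologicalSpace X] : Prop :=
  Nonempty (X ≃ₜ OnePoint ℕ)


lemma length_space_intermediate {U : Type*} [MetricSpace U] {K : Set U}
    (hK : IsLengthSpace ↥K) {p x : U} (hp : p ∈ K) (hx : x ∈ K) {r δ : ℝ}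
    (hr : 0 ≤ r) (hrx : r ≤ dist p x) (hδ : 0 < δ) :
    ∃ z ∈ K, dist p z ≤ r ∧ dist z x ≤ dist p x - r + δ := by
  set P : ↥K := ⟨p, hp⟩
  set X : ↥K := ⟨x, hx⟩
  have hfin : edist P X ≠ ⊤ := edist_ne_top _ _
  have h2 : ⨅ γ : Path P X, eVariationOn γ Set.univ < edist P X + ENNReal.ofReal δ := by
    rw [← hK P X]
    exact ENNReal.lt_add_right hfin (ENNReal.ofReal_pos.2 hδ).ne'
  obtain ⟨γ, hγ⟩ := iInf_lt_iff.1 h2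
  have hcont : Continuous fun t : unitInterval => dist P (γ t) :=
    continuous_const.dist γ.continuous
  have hmem : r ∈ Icc (dist P (γ 0)) (dist P (γ 1)) := by
    simp only [Path.source, Path.target, dist_self]
    exact ⟨hr, by rwa [Subtype.dist_eq]⟩
  obtain ⟨t, ht⟩ := intermediate_value_univ 0 1 hcont hmem
  simp only at ht
  refine ⟨(γ t : ↥K), (γ t).2, ?_, ?_⟩
  · have : dist p ((γ t : ↥K) : U) = dist P (γ t) := (Subtype.dist_eq P (γ t)).symm
    rw [this, ht]
  · -- variation bookkeeping
    have hIcc : Icc (0 : unitInterval) 1 = Set.univ := by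
      ext u; simp [unitInterval.nonneg', unitInterval.le_one']
    have hadd := eVariationOn.Icc_add_Icc γ (unitInterval.nonneg' (t := t))
      (unitInterval.le_one' (t := t)) (Set.mem_univ t)
    simp only [Set.univ_inter, hIcc] at hadd
    have e1 : edist (γ 0) (γ t) ≤ eVariationOn γ (Icc 0 t) :=
      eVariationOn.edist_le γ ⟨le_refl _, unitInterval.nonneg'⟩
        ⟨unitInterval.nonneg', le_refl _⟩
    have e2 : edist (γ t) (γ 1) ≤ eVariationOn γ (Icc t 1) :=
      eVariationOn.edist_le γ ⟨le_refl _, unitInterval.le_one'⟩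
        ⟨unitInterval.le_one', le_refl _⟩
    have hsum : edist (γ 0) (γ t) + edist (γ t) (γ 1) ≤ eVariationOn γ Set.univ := by
      rw [← hadd]; exact add_le_add e1 e2
    have hlt : edist (γ 0) (γ t) + edist (γ t) (γ 1) <
        ENNReal.ofReal (dist p x) + ENNReal.ofReal δ := by
      refine hsum.trans_lt (hγ.trans_le ?_)
      rw [edist_dist, Subtype.dist_eq]
    have h0t : edist (γ 0) (γ t) = ENNReal.ofReal r := by
      rw [Path.source, edist_dist, ht]
    have ht1 : edist (γ t) (γ 1) = ENNReal.ofReal (dist (γ t).1 x) := by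
      rw [Path.target, edist_dist, Subtype.dist_eq]
    rw [h0t, ht1, ← ENNReal.ofReal_add hr dist_nonneg,
      ← ENNReal.ofReal_add dist_nonneg hδ.le] at hlt
    have := (ENNReal.ofReal_lt_ofReal_iff_of_nonneg (by positivity)).1 hlt
    linarith

lemma length_space_move_to_ball {U : Type*} [MetricSpace U] {K : Set U}
    (hK : IsLengthSpace ↥K) {p y : U} (hp : p ∈ K) (hy : y ∈ K) {r δ : ℝ}
    (hr : 0 ≤ r) (hδ : 0 < δ) :
    ∃ z ∈ K, dist p z ≤ r ∧ dist z y ≤ max (dist p y - r) 0 + δ := by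
  by_cases h : dist p y ≤ r
  · refine ⟨y, hy, h, ?_⟩
    rw [dist_self]
    have := le_max_right (dist p y - r) (0:ℝ)
    linarith
  · obtain ⟨z, hz, h1, h2⟩ := length_space_intermediate hK hp hy hr (le_of_not_ge h) hδ
    refine ⟨z, hz, h1, h2.trans ?_⟩
    have := le_max_left (dist p y - r) (0:ℝ)
    linarith

/-- **Proposition 4.4.** Let `Q` be a countable dense subset of `U`, let `K ⊆ U` be a
length subspace and `p ∈ K`. If subsets `Aᵢ ⊆ Q` contain `p` and approximate (in Hausdorff
distance in `U`) the balls `B(p, k 2⁻ⁱ; K)` for `k ∈ {0, …, 2^{2i}}` with error `2⁻ⁱ`, then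
`(B(p, R; Aᵢ), p)` converges to `(B(p, R; K), p)` in the pointed Gromov–Hausdorff topology
for every `R > 0`. -/
theorem tendstoPointedGH_balls_of_hausdorff_approx {U : Type u} [MetricSpace U]
    (Q : Set U) (hQc : Q.Countable) (hQd : Dense Q)
    (K : Set U) (hK : IsLengthSpace ↥K) (p : U) (hpK : p ∈ K)
    (A : ℕ → Set U) (hAQ : ∀ i, A i ⊆ Q)
    (hA1 : ∀ i, p ∈ A i)
    (hA2 : ∀ (i k : ℕ), k ≤ 2 ^ (2 * i) →
      Metric.hausdorffDist
        {x | x ∈ K ∧ dist p x ≤ (k : ℝ) * (2 : ℝ) ^ (-(i : ℤ))}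
        {x | x ∈ A i ∧ dist p x ≤ (k : ℝ) * (2 : ℝ) ^ (-(i : ℤ))} ≤ (2 : ℝ) ^ (-(i : ℤ)))
    (R : ℝ) (hR : 0 < R) :
    TendstoPointedGH (fun i => ↥{x | x ∈ A i ∧ dist p x ≤ R})
      (fun i => ⟨p, ⟨hA1 i, by simpa using hR.le⟩⟩)
      ↥{x | x ∈ K ∧ dist p x ≤ R} ⟨p, ⟨hpK, by simpa using hR.le⟩⟩ := by
  classical
  obtain ⟨N, hN⟩ : ∃ N : ℕ, R < 2 ^ N := pow_unbounded_of_one_lt R one_lt_two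
  -- key existence statements, for i ≥ N
  have key1 : ∀ i : ℕ, N ≤ i → ∀ a : U, a ∈ A i → dist p a ≤ R →
      ∃ y : U, (y ∈ K ∧ dist p y ≤ R) ∧
        dist a y ≤ 4 * (2:ℝ) ^ (-(i:ℤ)) ∧ (a = p → y = p) := by
    intro i hi a haA haR
    have hepos : (0:ℝ) < (2:ℝ) ^ (-(i:ℤ)) := by positivity
    by_cases hap : a = p
    · refine ⟨p, ⟨hpK, by simpa using hR.le⟩, ?_, fun _ => rfl⟩
      rw [hap, dist_self]; positivity
    · have h2i : R ≤ (2:ℝ) ^ i := hN.le.trans (pow_le_pow_right₀ one_le_two hi)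
      have hmul : (2:ℝ) ^ i * (2:ℝ) ^ (-(i:ℤ)) = 1 := by
        rw [zpow_neg, zpow_natCast]
        exact mul_inv_cancel₀ (by positivity)
      set k := ⌈R * (2:ℝ) ^ i⌉₊ with hk
      have hc1 : R ≤ (k:ℝ) * (2:ℝ) ^ (-(i:ℤ)) := by
        nlinarith [Nat.le_ceil (R * (2:ℝ) ^ i)]
      have hc2 : (k:ℝ) * (2:ℝ) ^ (-(i:ℤ)) ≤ R + (2:ℝ) ^ (-(i:ℤ)) := by
        nlinarith [(Nat.ceil_lt_add_one (by positivity : (0:ℝ) ≤ R * 2 ^ i)).le]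
      have hc3 : k ≤ 2 ^ (2 * i) := by
        rw [hk, Nat.ceil_le]
        push_cast
        rw [two_mul, pow_add]
        nlinarith [pow_pos (zero_lt_two (α := ℝ)) i]
      have hHD := hA2 i k hc3
      set S := {x | x ∈ K ∧ dist p x ≤ (k:ℝ) * (2:ℝ) ^ (-(i:ℤ))} with hS
      set T := {x | x ∈ A i ∧ dist p x ≤ (k:ℝ) * (2:ℝ) ^ (-(i:ℤ))} with hT
      have hkpe : (0:ℝ) ≤ (k:ℝ) * (2:ℝ) ^ (-(i:ℤ)) := by positivity
      have hSne : S.Nonempty := ⟨p, hpK, by simpa using hkpe⟩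
      have hTne : T.Nonempty := ⟨p, hA1 i, by simpa using hkpe⟩
      have hSb : Bornology.IsBounded S :=
        (Metric.isBounded_closedBall (x := p) (r := (k:ℝ) * (2:ℝ) ^ (-(i:ℤ)))).subset
          (fun x hx => by simpa [Metric.mem_closedBall, dist_comm] using hx.2)
      have hTb : Bornology.IsBounded T :=
        (Metric.isBounded_closedBall (x := p) (r := (k:ℝ) * (2:ℝ) ^ (-(i:ℤ)))).subset
          (fun x hx => by simpa [Metric.mem_closedBall, dist_comm] using hx.2)
      have hfin : EMetric.hausdorffEdist T S ≠ ⊤ :=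
        Metric.hausdorffEdist_ne_top_of_nonempty_of_bounded hTne hSne hTb hSb
      have haT : a ∈ T := ⟨haA, haR.trans hc1⟩
      have hHD' : Metric.hausdorffDist T S < 2 * (2:ℝ) ^ (-(i:ℤ)) := by
        rw [Metric.hausdorffDist_comm]
        exact hHD.trans_lt (by linarith)
      obtain ⟨y, hyS, hdy⟩ := Metric.exists_dist_lt_of_hausdorffDist_lt haT hHD' hfin
      obtain ⟨z, hzK, hz1, hz2⟩ :=
        length_space_move_to_ball hK hpK hyS.1 hR.le hepos
      have hmax : max (dist p y - R) 0 ≤ (2:ℝ) ^ (-(i:ℤ)) :=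
        max_le (by linarith [hyS.2]) hepos.le
      refine ⟨z, ⟨hzK, hz1⟩, ?_, fun hap' => absurd hap' hap⟩
      have := dist_triangle a y z
      have := dist_comm z y
      linarith
  have key2 : ∀ i : ℕ, N ≤ i → ∀ y : U, y ∈ K → dist p y ≤ R →
      ∃ a : U, (a ∈ A i ∧ dist p a ≤ R) ∧
        dist y a ≤ 4 * (2:ℝ) ^ (-(i:ℤ)) ∧ (y = p → a = p) := by
    intro i hi y hyK hyR
    have hepos : (0:ℝ) < (2:ℝ) ^ (-(i:ℤ)) := by positivity
    by_cases hyp : y = p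
    · refine ⟨p, ⟨hA1 i, by simpa using hR.le⟩, ?_, fun _ => rfl⟩
      rw [hyp, dist_self]; positivity
    · have h2i : R ≤ (2:ℝ) ^ i := hN.le.trans (pow_le_pow_right₀ one_le_two hi)
      have hmul : (2:ℝ) ^ i * (2:ℝ) ^ (-(i:ℤ)) = 1 := by
        rw [zpow_neg, zpow_natCast]
        exact mul_inv_cancel₀ (by positivity)
      set k := ⌊R * (2:ℝ) ^ i⌋₊ with hk
      have hfl : (k:ℝ) ≤ R * (2:ℝ) ^ i := Nat.floor_le (by positivity)
      have hc1 : (k:ℝ) * (2:ℝ) ^ (-(i:ℤ)) ≤ R := by nlinarith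
      have hc2 : R ≤ (k:ℝ) * (2:ℝ) ^ (-(i:ℤ)) + (2:ℝ) ^ (-(i:ℤ)) := by
        nlinarith [(Nat.lt_floor_add_one (R * (2:ℝ) ^ i)).le]
      have hc3 : k ≤ 2 ^ (2 * i) := by
        have hcast : (k:ℝ) ≤ ((2 ^ (2 * i) : ℕ) : ℝ) := by
          push_cast
          rw [two_mul, pow_add]
          nlinarith [pow_pos (zero_lt_two (α := ℝ)) i]
        exact_mod_cast hcast
      have hHD := hA2 i k hc3
      set S := {x | x ∈ K ∧ dist p x ≤ (k:ℝ) * (2:ℝ) ^ (-(i:ℤ))} with hS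
      set T := {x | x ∈ A i ∧ dist p x ≤ (k:ℝ) * (2:ℝ) ^ (-(i:ℤ))} with hT
      have hkpe : (0:ℝ) ≤ (k:ℝ) * (2:ℝ) ^ (-(i:ℤ)) := by positivity
      have hSne : S.Nonempty := ⟨p, hpK, by simpa using hkpe⟩
      have hTne : T.Nonempty := ⟨p, hA1 i, by simpa using hkpe⟩
      have hSb : Bornology.IsBounded S :=
        (Metric.isBounded_closedBall (x := p) (r := (k:ℝ) * (2:ℝ) ^ (-(i:ℤ)))).subset
          (fun x hx => by simpa [Metric.mem_closedBall, dist_comm] using hx.2)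
      have hTb : Bornology.IsBounded T :=
        (Metric.isBounded_closedBall (x := p) (r := (k:ℝ) * (2:ℝ) ^ (-(i:ℤ)))).subset
          (fun x hx => by simpa [Metric.mem_closedBall, dist_comm] using hx.2)
      have hfin : EMetric.hausdorffEdist S T ≠ ⊤ :=
        Metric.hausdorffEdist_ne_top_of_nonempty_of_bounded hSne hTne hSb hTb
      obtain ⟨z, hzK, hz1, hz2⟩ :=
        length_space_move_to_ball hK hpK hyK hkpe hepos
      have hmax : max (dist p y - (k:ℝ) * (2:ℝ) ^ (-(i:ℤ))) 0 ≤ (2:ℝ) ^ (-(i:ℤ)) :=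
        max_le (by linarith) hepos.le
      have hzS : z ∈ S := ⟨hzK, hz1⟩
      have hHD' : Metric.hausdorffDist S T < 2 * (2:ℝ) ^ (-(i:ℤ)) :=
        hHD.trans_lt (by linarith)
      obtain ⟨a, haT, hda⟩ := Metric.exists_dist_lt_of_hausdorffDist_lt hzS hHD' hfin
      refine ⟨a, ⟨haT.1, haT.2.trans hc1⟩, ?_, fun hyp' => absurd hyp' hyp⟩
      have := dist_triangle y z a
      have := dist_comm z y
      linarith
  -- the approximation error
  set εp : ℕ → ℝ := fun i => if N ≤ i then 4 * (2:ℝ) ^ (-(i:ℤ)) else R with hεp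
  have hεpos : ∀ i, 0 < εp i := by
    intro i
    simp only [hεp]
    split_ifs
    · positivity
    · exact hR
  have main : ∀ i : ℕ,
      ∃ (f : ↥{x | x ∈ A i ∧ dist p x ≤ R} → ↥{x | x ∈ K ∧ dist p x ≤ R})
        (g : ↥{x | x ∈ K ∧ dist p x ≤ R} → ↥{x | x ∈ A i ∧ dist p x ≤ R}),
        (∀ x : ↥{x | x ∈ A i ∧ dist p x ≤ R}, dist x.1 (f x).1 ≤ εp i) ∧
        (∀ y : ↥{x | x ∈ K ∧ dist p x ≤ R}, dist y.1 (g y).1 ≤ εp i) ∧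
        f ⟨p, ⟨hA1 i, by simpa using hR.le⟩⟩ = ⟨p, ⟨hpK, by simpa using hR.le⟩⟩ ∧
        g ⟨p, ⟨hpK, by simpa using hR.le⟩⟩ = ⟨p, ⟨hA1 i, by simpa using hR.le⟩⟩ := by
    intro i
    by_cases h : N ≤ i
    · refine ⟨fun x => ⟨(key1 i h x.1 x.2.1 x.2.2).choose, (key1 i h x.1 x.2.1 x.2.2).choose_spec.1⟩,
        fun y => ⟨(key2 i h y.1 y.2.1 y.2.2).choose, (key2 i h y.1 y.2.1 y.2.2).choose_spec.1⟩,
        ?_, ?_, ?_, ?_⟩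
      · intro x
        simp only [hεp, if_pos h]
        exact (key1 i h x.1 x.2.1 x.2.2).choose_spec.2.1
      · intro y
        simp only [hεp, if_pos h]
        exact (key2 i h y.1 y.2.1 y.2.2).choose_spec.2.1
      · exact Subtype.ext ((key1 i h p (hA1 i) (by simpa using hR.le)).choose_spec.2.2 rfl)
      · exact Subtype.ext ((key2 i h p hpK (by simpa using hR.le)).choose_spec.2.2 rfl)
    · refine ⟨fun _ => ⟨p, ⟨hpK, by simpa using hR.le⟩⟩,
        fun _ => ⟨p, ⟨hA1 i, by simpa using hR.le⟩⟩, ?_, ?_, rfl, rfl⟩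
      · intro x
        simp only [hεp, if_neg h]
        rw [dist_comm]
        exact x.2.2
      · intro y
        simp only [hεp, if_neg h]
        rw [dist_comm]
        exact y.2.2
  choose fM gM hf hg hfb hgb using main
  refine ⟨fun i => 2 * εp i + (2:ℝ) ^ (-(i:ℤ)), fM, gM, ?_, ?_, ?_⟩
  · intro i
    beta_reduce
    have : (0:ℝ) < (2:ℝ) ^ (-(i:ℤ)) := by positivity
    linarith [hεpos i]
  · have h9 : Tendsto (fun i : ℕ => 9 * (2:ℝ) ^ (-(i:ℤ))) atTop (𝓝 0) := by
      have heq : ∀ i : ℕ, 9 * (2:ℝ) ^ (-(i:ℤ)) = 9 * ((1:ℝ)/2) ^ i := by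
        intro i
        rw [zpow_neg, zpow_natCast, one_div, inv_pow]
      have := (tendsto_pow_atTop_nhds_zero_of_lt_one (by norm_num : (0:ℝ) ≤ 1/2)
        (by norm_num : (1:ℝ)/2 < 1)).const_mul (9:ℝ)
      rw [mul_zero] at this
      exact this.congr fun i => (heq i).symm
    refine Tendsto.congr' ?_ h9
    filter_upwards [eventually_ge_atTop N] with i hi
    simp only [hεp, if_pos hi]
    ring
  · intro i
    beta_reduce
    have hep : (0:ℝ) < (2:ℝ) ^ (-(i:ℤ)) := by positivity
    have hεnn : 0 < εp i := hεpos i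
    refine ⟨⟨?_, ?_, ?_, ?_⟩, hfb i, hgb i⟩
    · intro x y
      have h1 := hf i x
      have h2 := hf i y
      rw [Subtype.dist_eq x y, Subtype.dist_eq (fM i x) (fM i y), abs_sub_lt_iff]
      constructor
      · have t1 := dist_triangle4 x.1 (fM i x).1 (fM i y).1 y.1
        have t2 := dist_comm (fM i y).1 y.1
        linarith
      · have t1 := dist_triangle4 (fM i x).1 x.1 y.1 (fM i y).1
        have t2 := dist_comm (fM i x).1 x.1
        linarith
    · intro x y
      have h1 := hg i x
      have h2 := hg i y
      rw [Subtype.dist_eq x y, Subtype.dist_eq (gM i x) (gM i y), abs_sub_lt_iff]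
      constructor
      · have t1 := dist_triangle4 x.1 (gM i x).1 (gM i y).1 y.1
        have t2 := dist_comm (gM i y).1 y.1
        linarith
      · have t1 := dist_triangle4 (gM i x).1 x.1 y.1 (gM i y).1
        have t2 := dist_comm (gM i x).1 x.1
        linarith
    · intro x
      have h1 := hf i x
      have h2 := hg i (fM i x)
      rw [Subtype.dist_eq]
      have t1 := dist_triangle (gM i (fM i x)).1 (fM i x).1 x.1
      have t2 := dist_comm (fM i x).1 (gM i (fM i x)).1
      have t3 := dist_comm (fM i x).1 x.1
      linarith
    · intro y
      have h1 := hg i y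
      have h2 := hf i (gM i y)
      rw [Subtype.dist_eq]
      have t1 := dist_triangle (fM i (gM i y)).1 (gM i y).1 y.1
      have t2 := dist_comm (gM i y).1 (fM i (gM i y)).1
      have t3 := dist_comm (gM i y).1 y.1
      linarith

end
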